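/- arXiv:1504.06504 — 8 statements merged into one kernel-verified Lean document; each statement's English description precedes it below -/
import Mathlib

section
/- Let {Λ_i}_{i∈I} be a g-frame for a finite-dimensional Hilbert space H with g-frame operator S, and let {Γ_i}_{i∈I} be any Parseval g-frame. Then ∑_i ‖Λ_i − Γ_i‖_F² = ∑_i ‖Λ_i − Λ_i S^{-1/2}‖_F² + ∑_i ‖Γ_i S^{1/4} − Λ_i S^{-1/4}‖_F². -/
/-!
Expand every squared Hilbert–Schmidt norm as `‖T‖² - 2 Re⟨T, U⟩ + ‖U‖²` and sum over `i`.
The g-frame turns `∑ᵢ ⟨Λᵢ X, Λᵢ Y⟩` into `tr (X* S Y)` and the Parseval g-frame turns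
`∑ᵢ ‖Γᵢ X‖²` into `‖X‖²`, so every term becomes `Re tr S^r` with `r ∈ {0, 1/2, 1}`, except the
cross term `Re ⟨Γᵢ S^{1/4}, Λᵢ S^{-1/4}⟩ = Re ⟨Γᵢ, Λᵢ⟩` (cyclicity of the trace), which occurs
on both sides. What is left is `tr 1 + tr S = (tr S - 2 tr S^{1/2} + tr 1) + 2 tr S^{1/2}`.
-/

open scoped InnerProductSpace
open ContinuousLinearMap

/-- The Hilbert–Schmidt norm squared `‖T‖_F²` of an operator on a finite-dimensional
Hilbert space. -/
noncomputable def hsNormSq {H K : Type*} [NormedAddCommGroup H] [InnerProductSpace ℂ H]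
    [FiniteDimensional ℂ H] [NormedAddCommGroup K] [InnerProductSpace ℂ K]
    (T : H →L[ℂ] K) : ℝ :=
  ∑ k, ‖T (stdOrthonormalBasis ℂ H k)‖ ^ 2

section HilbertSchmidt

variable {H K : Type*} [NormedAddCommGroup H] [InnerProductSpace ℂ H] [FiniteDimensional ℂ H]
  [NormedAddCommGroup K] [InnerProductSpace ℂ K]

noncomputable def hsInner (T U : H →L[ℂ] K) : ℂ :=
  ∑ k, ⟪T (stdOrthonormalBasis ℂ H k), U (stdOrthonormalBasis ℂ H k)⟫_ℂ

lemma hsNormSq_eq_re_hsInner (T : H →L[ℂ] K) : hsNormSq T = (hsInner T T).re := by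
  simp [hsNormSq, hsInner, Complex.re_sum, ← Complex.ofReal_pow]

lemma hsNormSq_sub (T U : H →L[ℂ] K) :
    hsNormSq (T - U) = hsNormSq T - 2 * (hsInner T U).re + hsNormSq U := by
  simp only [hsNormSq, hsInner, Complex.re_sum, Finset.mul_sum, ← Finset.sum_sub_distrib,
    ← Finset.sum_add_distrib, sub_apply]
  exact Finset.sum_congr rfl fun k _ => by simpa using norm_sub_sq (𝕜 := ℂ) (T _) (U _)

lemma hsNormSq_sub_comm (T U : H →L[ℂ] K) : hsNormSq (T - U) = hsNormSq (U - T) := by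
  simp only [hsNormSq, sub_apply, norm_sub_rev]

lemma abs_re_hsInner_le (T U : H →L[ℂ] K) :
    |(hsInner T U).re| ≤ (hsNormSq T + hsNormSq U) / 2 := by
  rw [hsInner, Complex.re_sum, hsNormSq, hsNormSq, ← Finset.sum_add_distrib, Finset.sum_div]
  refine (Finset.abs_sum_le_sum_abs _ _).trans (Finset.sum_le_sum fun k _ => ?_)
  set u := T (stdOrthonormalBasis ℂ H k)
  set v := U (stdOrthonormalBasis ℂ H k)
  have huv : |(⟪u, v⟫_ℂ).re| ≤ ‖u‖ * ‖v‖ :=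
    (Complex.abs_re_le_norm _).trans (norm_inner_le_norm (𝕜 := ℂ) u v)
  nlinarith [sq_nonneg (‖u‖ - ‖v‖)]

lemma summable_re_hsInner {I : Type*} {T U : I → H →L[ℂ] K}
    (hT : Summable fun i => hsNormSq (T i)) (hU : Summable fun i => hsNormSq (U i)) :
    Summable fun i => (hsInner (T i) (U i)).re :=
  .of_norm_bounded ((hT.add hU).div_const 2) fun _ => abs_re_hsInner_le _ _

lemma HasSum.hsNormSq_sub {I : Type*} {T U : I → H →L[ℂ] K} {a b c : ℝ}
    (hT : HasSum (fun i => hsNormSq (T i)) a) (hTU : HasSum (fun i => (hsInner (T i) (U i)).re) b)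
    (hU : HasSum (fun i => hsNormSq (U i)) c) :
    HasSum (fun i => hsNormSq (T i - U i)) (a - 2 * b + c) := by
  simpa only [_root_.hsNormSq_sub] using (hT.sub (hTU.mul_left 2)).add hU

variable [CompleteSpace K]

lemma hsInner_eq_trace (T U : H →L[ℂ] K) :
    hsInner T U = LinearMap.trace ℂ H (adjoint T ∘L U) := by
  simp [hsInner, LinearMap.trace_eq_sum_inner _ (stdOrthonormalBasis ℂ H), adjoint_inner_right]

lemma hsInner_comp_comp (T U : H →L[ℂ] K) (P Q : H →L[ℂ] H) :
    hsInner (T ∘L P) (U ∘L Q) = hsInner T (U ∘L Q ∘L adjoint P) := by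
  rw [hsInner_eq_trace, hsInner_eq_trace, adjoint_comp]
  exact LinearMap.trace_mul_comm ℂ (adjoint P : H →ₗ[ℂ] H) (adjoint T ∘L U ∘L Q : H →L[ℂ] H)

end HilbertSchmidt

section Rpow

variable {H K : Type*} [NormedAddCommGroup H] [InnerProductSpace ℂ H] [FiniteDimensional ℂ H]
  {S : H →L[ℂ] H}

lemma comp_rpow_zero [NormedAddCommGroup K] [InnerProductSpace ℂ K] (hS : 0 ≤ S)
    (T : H →L[ℂ] K) : T ∘L S ^ (0 : ℝ) = T := by
  rw [CFC.rpow_zero S]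
  rfl

lemma hsInner_rpow_comp_rpow (hS : IsStrictlyPositive S) (x y : ℝ) :
    hsInner (S ^ x) (S ∘L S ^ y) = LinearMap.trace ℂ H (S ^ (x + y + 1) : H →L[ℂ] H) := by
  rw [hsInner_eq_trace, CFC.rpow_nonneg.isSelfAdjoint.adjoint_eq,
    show x + y + 1 = x + (1 + y) by ring, CFC.rpow_add hS.isUnit, CFC.rpow_add hS.isUnit,
    CFC.rpow_one S]
  rfl

lemma hsNormSq_rpow (hS : IsStrictlyPositive S) (x : ℝ) :
    hsNormSq (S ^ x) = (LinearMap.trace ℂ H (S ^ (x + x) : H →L[ℂ] H)).re := by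
  rw [hsNormSq_eq_re_hsInner, hsInner_eq_trace, CFC.rpow_nonneg.isSelfAdjoint.adjoint_eq,
    CFC.rpow_add hS.isUnit]
  rfl

lemma hsInner_comp_rpow_comp_rpow_neg [NormedAddCommGroup K] [InnerProductSpace ℂ K]
    [CompleteSpace K] (hS : IsStrictlyPositive S) (T U : H →L[ℂ] K) (x : ℝ) :
    hsInner (T ∘L S ^ x) (U ∘L S ^ (-x)) = hsInner T U := by
  rw [hsInner_comp_comp, CFC.rpow_nonneg.isSelfAdjoint.adjoint_eq, ← mul_def,
    CFC.rpow_neg_mul_rpow x hS]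
  rfl

end Rpow

section GFrame

variable {H K I : Type*} [NormedAddCommGroup H] [InnerProductSpace ℂ H]
  [NormedAddCommGroup K] [InnerProductSpace ℂ K]

def IsParsevalGFrame (Γ : I → H →L[ℂ] K) : Prop :=
  ∀ x, HasSum (fun i => ‖Γ i x‖ ^ 2) (‖x‖ ^ 2)

namespace IsParsevalGFrame

variable [FiniteDimensional ℂ H] {Γ : I → H →L[ℂ] K}

lemma hasSum_hsNormSq_comp (hΓ : IsParsevalGFrame Γ) (X : H →L[ℂ] H) :
    HasSum (fun i => hsNormSq (Γ i ∘L X)) (hsNormSq X) :=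
  hasSum_sum fun _ _ => hΓ _

lemma hasSum_hsNormSq_comp_rpow (hΓ : IsParsevalGFrame Γ) {S : H →L[ℂ] H}
    (hS : IsStrictlyPositive S) {x z : ℝ} (hz : x + x = z) :
    HasSum (fun i => hsNormSq (Γ i ∘L S ^ x)) (LinearMap.trace ℂ H (S ^ z : H →L[ℂ] H)).re := by
  simpa [hsNormSq_rpow hS, hz] using hΓ.hasSum_hsNormSq_comp (S ^ x)

end IsParsevalGFrame

variable [CompleteSpace H] [CompleteSpace K]

def IsGFrameOperator (Λ : I → H →L[ℂ] K) (S : H →L[ℂ] H) : Prop :=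
  ∀ x, HasSum (fun i => adjoint (Λ i) (Λ i x)) (S x)

namespace IsGFrameOperator

variable {Λ : I → H →L[ℂ] K} {S : H →L[ℂ] H}

lemma hasSum_inner (hS : IsGFrameOperator Λ S) (x y : H) :
    HasSum (fun i => ⟪Λ i x, Λ i y⟫_ℂ) ⟪x, S y⟫_ℂ := by
  simpa [adjoint_inner_right] using (innerSL ℂ x).hasSum (hS y)

lemma hasSum_norm_sq (hS : IsGFrameOperator Λ S) (x : H) :
    HasSum (fun i => ‖Λ i x‖ ^ 2) (⟪x, S x⟫_ℂ).re := by
  simpa [← Complex.ofReal_pow] using Complex.reCLM.hasSum (hS.hasSum_inner x x)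

lemma isSelfAdjoint (hS : IsGFrameOperator Λ S) : IsSelfAdjoint S := by
  refine isSelfAdjoint_iff_isSymmetric.2 fun x y => ?_
  have h := (hS.hasSum_inner y x).star
  simp only [RCLike.star_def, inner_conj_symm] at h
  exact h.unique (hS.hasSum_inner x y)

lemma algebraMap_le {A : ℝ} (hS : IsGFrameOperator Λ S)
    (hlow : ∀ x : H, A * ‖x‖ ^ 2 ≤ ∑' i, ‖Λ i x‖ ^ 2) : algebraMap ℝ (H →L[ℂ] H) A ≤ S := by
  refine (le_def _ _).2 (isPositive_def'.2
    ⟨hS.isSelfAdjoint.sub (.algebraMap _ (.all A)), fun x => ?_⟩)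
  have hAx : (⟪A • x, x⟫_ℂ).re = A * ‖x‖ ^ 2 := by
    rw [RCLike.real_smul_eq_coe_smul (K := ℂ), inner_smul_real_left]
    simp [← Complex.ofReal_pow]
  have hSx : (⟪S x, x⟫_ℂ).re = (⟪x, S x⟫_ℂ).re := by
    simpa using inner_re_symm (𝕜 := ℂ) (S x) x
  simpa [reApplyInnerSelf, inner_sub_left, hAx, hSx, (hS.hasSum_norm_sq x).tsum_eq] using hlow x

lemma isStrictlyPositive {A : ℝ} (hS : IsGFrameOperator Λ S) (hA : 0 < A)
    (hlow : ∀ x : H, A * ‖x‖ ^ 2 ≤ ∑' i, ‖Λ i x‖ ^ 2) : IsStrictlyPositive S :=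
  (isStrictlyPositive_algebraMap hA).of_le (hS.algebraMap_le hlow)

variable [FiniteDimensional ℂ H]

lemma hasSum_hsInner_comp (hS : IsGFrameOperator Λ S) (X Y : H →L[ℂ] H) :
    HasSum (fun i => hsInner (Λ i ∘L X) (Λ i ∘L Y)) (hsInner X (S ∘L Y)) :=
  hasSum_sum fun _ _ => hS.hasSum_inner _ _

lemma hasSum_re_hsInner_comp_rpow (hS : IsGFrameOperator Λ S) (hSpos : IsStrictlyPositive S)
    {x y z : ℝ} (hz : x + y + 1 = z) :
    HasSum (fun i => (hsInner (Λ i ∘L S ^ x) (Λ i ∘L S ^ y)).re)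
      (LinearMap.trace ℂ H (S ^ z : H →L[ℂ] H)).re := by
  simpa [hsInner_rpow_comp_rpow hSpos, hz] using
    Complex.reCLM.hasSum (hS.hasSum_hsInner_comp (S ^ x) (S ^ y))

lemma hasSum_hsNormSq_comp_rpow (hS : IsGFrameOperator Λ S) (hSpos : IsStrictlyPositive S)
    {x z : ℝ} (hz : x + x + 1 = z) :
    HasSum (fun i => hsNormSq (Λ i ∘L S ^ x)) (LinearMap.trace ℂ H (S ^ z : H →L[ℂ] H)).re := by
  simpa [hsNormSq_eq_re_hsInner] using hS.hasSum_re_hsInner_comp_rpow hSpos hz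

end IsGFrameOperator

end GFrame

theorem gframe_parseval_approx_identity_general
    {H K : Type*} [NormedAddCommGroup H] [InnerProductSpace ℂ H] [FiniteDimensional ℂ H]
    [NormedAddCommGroup K] [InnerProductSpace ℂ K] [CompleteSpace K]
    {I : Type*} (Λ : I → (H →L[ℂ] K)) (S : H →L[ℂ] H)
    (A : ℝ) (hA : 0 < A)
    (hlow : ∀ x : H, A * ‖x‖ ^ 2 ≤ ∑' i, ‖Λ i x‖ ^ 2)
    (hS : ∀ x : H, HasSum (fun i => (Λ i).adjoint (Λ i x)) (S x))
    (Γ : I → (H →L[ℂ] K))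
    (hΓ : ∀ x : H, HasSum (fun i => ‖Γ i x‖ ^ 2) (‖x‖ ^ 2)) :
    ∑' i, hsNormSq (Λ i - Γ i)
      = (∑' i, hsNormSq (Λ i - (Λ i) ∘L cfc (fun t : ℝ => t ^ (-(1/2 : ℝ))) S))
        + ∑' i, hsNormSq ((Γ i) ∘L cfc (fun t : ℝ => t ^ ((1/4 : ℝ))) S
            - (Λ i) ∘L cfc (fun t : ℝ => t ^ (-(1/4 : ℝ))) S) := by
  have hSΛ : IsGFrameOperator Λ S := hS
  have hΓ : IsParsevalGFrame Γ := hΓ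
  have hpos : IsStrictlyPositive S := hSΛ.isStrictlyPositive hA hlow
  simp only [← CFC.rpow_eq_cfc_real hpos.nonneg, hsNormSq_sub_comm (Λ _) (Γ _)]
  have hΛ₀ := hSΛ.hasSum_hsNormSq_comp_rpow hpos (x := 0) (z := 1) (by norm_num)
  have hΓ₀ := hΓ.hasSum_hsNormSq_comp_rpow hpos (x := 0) (z := 0) (by norm_num)
  have hΛR := hSΛ.hasSum_re_hsInner_comp_rpow hpos (x := 0) (y := -(1/2)) (z := 1/2)
    (by norm_num)
  simp only [comp_rpow_zero hpos.nonneg] at hΛ₀ hΓ₀ hΛR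
  have hΓΛ := (summable_re_hsInner hΓ₀.summable hΛ₀.summable).hasSum
  have hL := hΓ₀.hsNormSq_sub hΓΛ hΛ₀
  have hR₁ := hΛ₀.hsNormSq_sub hΛR
    (hSΛ.hasSum_hsNormSq_comp_rpow hpos (x := -(1/2)) (z := 0) (by norm_num))
  have hR₂ := (hΓ.hasSum_hsNormSq_comp_rpow hpos (x := 1/4) (z := 1/2) (by norm_num)).hsNormSq_sub
    (by simpa only [hsInner_comp_rpow_comp_rpow_neg hpos] using hΓΛ)
    (hSΛ.hasSum_hsNormSq_comp_rpow hpos (x := -(1/4)) (z := 1/2) (by norm_num))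
  rw [hL.tsum_eq, hR₁.tsum_eq, hR₂.tsum_eq]
  ring

/-- For a g-frame `{Λ i}` with frame operator `S` and any Parseval g-frame `{Γ i}`:
`∑ i ‖Λ i − Γ i‖_F² = ∑ i ‖Λ i − Λ i S^{-1/2}‖_F² + ∑ i ‖Γ i S^{1/4} − Λ i S^{-1/4}‖_F²`. -/
theorem gframe_parseval_approx_identity
    {H K : Type*} [NormedAddCommGroup H] [InnerProductSpace ℂ H] [FiniteDimensional ℂ H]
    [NormedAddCommGroup K] [InnerProductSpace ℂ K] [CompleteSpace K]
    {I : Type*} (Λ : I → (H →L[ℂ] K)) (S : H →L[ℂ] H)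
    (A B : ℝ) (hA : 0 < A) (hB : 0 < B)
    (hsum : ∀ x : H, Summable fun i => ‖Λ i x‖ ^ 2)
    (hlow : ∀ x : H, A * ‖x‖ ^ 2 ≤ ∑' i, ‖Λ i x‖ ^ 2)
    (hup : ∀ x : H, ∑' i, ‖Λ i x‖ ^ 2 ≤ B * ‖x‖ ^ 2)
    (hS : ∀ x : H, HasSum (fun i => (Λ i).adjoint (Λ i x)) (S x))
    (Γ : I → (H →L[ℂ] K))
    (hΓ : ∀ x : H, HasSum (fun i => ‖Γ i x‖ ^ 2) (‖x‖ ^ 2)) :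
    ∑' i, hsNormSq (Λ i - Γ i)
      = (∑' i, hsNormSq (Λ i - (Λ i) ∘L cfc (fun t : ℝ => t ^ (-(1/2 : ℝ))) S))
        + ∑' i, hsNormSq ((Γ i) ∘L cfc (fun t : ℝ => t ^ ((1/4 : ℝ))) S
            - (Λ i) ∘L cfc (fun t : ℝ => t ^ (-(1/4 : ℝ))) S) :=
  gframe_parseval_approx_identity_general Λ S A hA hlow hS Γ hΓ
end

section
/- If 0 ≤ ε < 1, then the bound n(1−√(1−ε))² for ∑_i ‖Λ_i − Λ_i S^{-1/2}‖_F² over ε-nearly Parseval g-frames on an n-dimensional Hilbert space is attained: the family Λ_k x = √(1−ε)⟨x, u_k⟩ (k = 1,…,n), for an orthonormal basis {u_k} of H, is an ε-nearly Parseval g-frame with ∑_k ‖Λ_k − Λ_k S^{-1/2}‖_F² = n(1−√(1−ε))². -/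
set_option maxHeartbeats 1000000
set_option synthInstance.maxHeartbeats 200000

open scoped InnerProductSpace

/-- Parseval's identity for a finite orthonormal basis. -/
lemma parseval_aux {E : Type*} [NormedAddCommGroup E] [InnerProductSpace ℂ E]
    {ι : Type*} [Fintype ι] (b : OrthonormalBasis ι ℂ E) (x : E) :
    ∑ i, ‖⟪b i, x⟫_ℂ‖ ^ 2 = ‖x‖ ^ 2 := by
  have h : ‖b.repr x‖ = ‖x‖ := b.repr.norm_map x
  rw [← h, EuclideanSpace.norm_eq, Real.sq_sqrt (by positivity)]
  simp [b.repr_apply_apply]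

/-- Optimality of the bound `n (1 − √(1−ε))²`: for an orthonormal basis `{u k}` of an
`n`-dimensional Hilbert space, the functionals `Λ k = √(1−ε) ⟨·, u k⟩` form an
ε-nearly Parseval g-frame (with values in `K = ℂ`), whose frame operator `S` satisfies
`∑ k ‖Λ k − Λ k S^{-1/2}‖_F² = n (1 − √(1−ε))²`. -/
theorem nearly_parseval_gframe_dist_optimal
    {H : Type*} [NormedAddCommGroup H] [InnerProductSpace ℂ H] [FiniteDimensional ℂ H]
    (n : ℕ) (u : OrthonormalBasis (Fin n) ℂ H)
    (ε : ℝ) (hε0 : 0 ≤ ε) (hε1 : ε < 1)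
    (Λ : Fin n → (H →L[ℂ] ℂ))
    (hΛ : ∀ k, Λ k = (Real.sqrt (1 - ε) : ℂ) • (innerSL ℂ (u k)))
    (S : H →L[ℂ] H) (hS : S = ∑ k, (Λ k).adjoint ∘L (Λ k)) :
    (∀ x : H, (1 - ε) * ‖x‖ ^ 2 ≤ ∑ k, ‖Λ k x‖ ^ 2 ∧
        ∑ k, ‖Λ k x‖ ^ 2 ≤ (1 + ε) * ‖x‖ ^ 2) ∧
    ∑ k, hsNormSq (Λ k - (Λ k) ∘L cfc (fun t : ℝ => t ^ (-(1/2 : ℝ))) S)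
      = (n : ℝ) * (1 - Real.sqrt (1 - ε)) ^ 2 := by
  have h1ε : (0:ℝ) < 1 - ε := by linarith
  set s : ℝ := Real.sqrt (1 - ε) with hs_def
  have hs2 : s ^ 2 = 1 - ε := Real.sq_sqrt h1ε.le
  have hspos : 0 < s := Real.sqrt_pos.mpr h1ε
  -- pointwise values of Λ
  have hΛval : ∀ k (x : H), Λ k x = (s : ℂ) * ⟪u k, x⟫_ℂ := by
    intro k x; rw [hΛ]; simp
  -- ∑ ‖Λ k x‖² = (1-ε) ‖x‖²
  have key : ∀ x : H, ∑ k, ‖Λ k x‖ ^ 2 = (1 - ε) * ‖x‖ ^ 2 := by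
    intro x
    have h1 : ∀ k, ‖Λ k x‖ ^ 2 = s ^ 2 * ‖⟪u k, x⟫_ℂ‖ ^ 2 := by
      intro k
      rw [hΛval, norm_mul, mul_pow, Complex.norm_real, Real.norm_eq_abs,
        abs_of_pos hspos]
    rw [Finset.sum_congr rfl fun k _ => h1 k, ← Finset.mul_sum, parseval_aux u x, hs2]
  -- rewrite Λ k as innerSL of a vector
  have hΛ' : ∀ k, Λ k = innerSL ℂ ((s : ℂ) • u k) := by
    intro k
    rw [hΛ, map_smulₛₗ, Complex.conj_ofReal]
  -- adjoint composition formula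
  have hadj : ∀ (v x : H), ((innerSL ℂ v).adjoint ∘L innerSL ℂ v) x = ⟪v, x⟫_ℂ • v := by
    intro v x
    apply ext_inner_right ℂ
    intro y
    rw [ContinuousLinearMap.coe_comp', Function.comp_apply,
      ContinuousLinearMap.adjoint_inner_left]
    simp [inner_smul_left, mul_comm]
  -- identify S
  have hSalg : S = algebraMap ℝ (H →L[ℂ] H) (1 - ε) := by
    ext x
    rw [hS, ContinuousLinearMap.sum_apply]
    have hterm : ∀ k, ((Λ k).adjoint ∘L Λ k) x = ((1 - ε : ℝ) : ℂ) • (⟪u k, x⟫_ℂ • u k) := by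
      intro k
      rw [hΛ' k, hadj, inner_smul_left, Complex.conj_ofReal, smul_smul, smul_smul]
      congr 1
      rw [← hs2]
      push_cast
      ring
    rw [Finset.sum_congr rfl fun k _ => hterm k, ← Finset.smul_sum, u.sum_repr']
    rw [Algebra.algebraMap_eq_smul_one, ContinuousLinearMap.smul_apply,
      ContinuousLinearMap.one_apply]
    rw [← IsScalarTower.algebraMap_smul ℂ (1 - ε : ℝ) x]
    rfl
  refine ⟨fun x => by rw [key]; constructor <;> nlinarith [sq_nonneg ‖x‖], ?_⟩
  -- the cfc of S
  have hr : (1 - ε) ^ (-(1/2 : ℝ)) = s⁻¹ := by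
    rw [Real.rpow_neg h1ε.le, ← Real.sqrt_eq_rpow]
  have hcfc : cfc (fun t : ℝ => t ^ (-(1/2 : ℝ))) S = algebraMap ℝ (H →L[ℂ] H) s⁻¹ := by
    rw [hSalg, cfc_algebraMap, hr]
  rw [hcfc]
  -- compute each Hilbert–Schmidt norm
  have hterm : ∀ k, hsNormSq (Λ k - (Λ k) ∘L algebraMap ℝ (H →L[ℂ] H) s⁻¹)
      = (1 - s) ^ 2 := by
    intro k
    unfold hsNormSq
    have h1 : ∀ j, ‖(Λ k - (Λ k) ∘L algebraMap ℝ (H →L[ℂ] H) s⁻¹)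
        (stdOrthonormalBasis ℂ H j)‖ ^ 2
        = (1 - s⁻¹) ^ 2 * (s ^ 2 * ‖⟪stdOrthonormalBasis ℂ H j, u k⟫_ℂ‖ ^ 2) := by
      intro j
      set e := stdOrthonormalBasis ℂ H j
      have : (Λ k - (Λ k) ∘L algebraMap ℝ (H →L[ℂ] H) s⁻¹) e
          = (1 - s⁻¹ : ℝ) • Λ k e := by
        rw [ContinuousLinearMap.sub_apply, ContinuousLinearMap.coe_comp',
          Function.comp_apply, Algebra.algebraMap_eq_smul_one,
          ContinuousLinearMap.smul_apply, ContinuousLinearMap.one_apply,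
          ContinuousLinearMap.map_smul_of_tower, sub_smul, one_smul]
      rw [this, norm_smul, Real.norm_eq_abs, mul_pow, sq_abs, hΛval, norm_mul,
        Complex.norm_real, Real.norm_eq_abs, abs_of_pos hspos, mul_pow,
        ← norm_inner_symm]
    rw [Finset.sum_congr rfl fun j _ => h1 j, ← Finset.mul_sum, ← Finset.mul_sum,
      parseval_aux (stdOrthonormalBasis ℂ H) (u k), u.orthonormal.1 k]
    have hsne : s ≠ 0 := hspos.ne'
    field_simp
    ring
  rw [Finset.sum_congr rfl fun k _ => hterm k, Finset.sum_const, Finset.card_univ,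
    Fintype.card_fin, nsmul_eq_mul]
end

section
/- Let {Λ_i}_{i∈I} be a g-frame for H with g-frame operator S, and let {Γ_i}_{i∈I} be an alternate dual g-frame of {Λ_i}. Then for every x ∈ H, ∑_i ‖Λ_i x − Γ_i x‖² = ∑_i ‖Λ_i x − Λ_i S^{-1} x‖² + ∑_i ‖Λ_i S^{-1} x − Γ_i x‖². -/
/-!
Put `v = S⁻¹ x` and split `Λ i x - Γ i x = (Λ i x - Λ i v) + (Λ i v - Γ i x)`. Both `Λ v` and
`Γ x` are sent to `x` by the synthesis map `y ↦ ∑ i, (Λ i)† (y i)` (the first because `S v = x`,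
the second because `Γ` is a dual), so their difference is orthogonal to every analysis vector
`Λ u` in `ℓ²(I, K)`, in particular to `Λ (x - v)`, and Pythagoras gives the identity.
-/

open scoped InnerProductSpace

theorem summable_norm_sub_sq {E I : Type*} [SeminormedAddCommGroup E] {f g : I → E}
    (hf : Summable fun i => ‖f i‖ ^ 2) (hg : Summable fun i => ‖g i‖ ^ 2) :
    Summable fun i => ‖f i - g i‖ ^ 2 := by
  refine Summable.of_nonneg_of_le (fun i => by positivity) (fun i => ?_) ((hf.add hg).mul_left 2)
  calc ‖f i - g i‖ ^ 2 ≤ (‖f i‖ + ‖g i‖) ^ 2 := by gcongr; exact norm_sub_le _ _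
    _ ≤ 2 * (‖f i‖ ^ 2 + ‖g i‖ ^ 2) := add_sq_le

section InnerProduct

variable {𝕜 E F I : Type*} [RCLike 𝕜]
  [NormedAddCommGroup E] [InnerProductSpace 𝕜 E] [NormedAddCommGroup F] [InnerProductSpace 𝕜 F]

theorem HasSum.norm_add_sq {f g : I → E} {a b : ℝ}
    (hf : HasSum (fun i => ‖f i‖ ^ 2) a) (hg : HasSum (fun i => ‖g i‖ ^ 2) b)
    (hfg : HasSum (fun i => ⟪f i, g i⟫_𝕜) 0) :
    HasSum (fun i => ‖f i + g i‖ ^ 2) (a + b) := by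
  have hre : HasSum (fun i => 2 * RCLike.re ⟪f i, g i⟫_𝕜) 0 := by
    simpa using (hfg.mapL (RCLike.reCLM : 𝕜 →L[ℝ] ℝ)).mul_left 2
  convert (hf.add hre).add hg using 1
  · funext i
    exact _root_.norm_add_sq (𝕜 := 𝕜) (f i) (g i)
  · ring

variable [CompleteSpace E] [CompleteSpace F]

theorem HasSum.inner_apply_of_hasSum_adjoint {Λ : I → E →L[𝕜] F} {y : I → F} {z : E}
    (h : HasSum (fun i => (Λ i).adjoint (y i)) z) (u : E) :
    HasSum (fun i => ⟪Λ i u, y i⟫_𝕜) ⟪u, z⟫_𝕜 := by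
  simpa only [innerSL_apply_apply, ContinuousLinearMap.adjoint_inner_right] using
    h.mapL (innerSL 𝕜 u)

theorem hasSum_inner_apply_sub_eq_zero_of_hasSum_adjoint {Λ : I → E →L[𝕜] F} {y y' : I → F}
    {z : E} (h : HasSum (fun i => (Λ i).adjoint (y i)) z)
    (h' : HasSum (fun i => (Λ i).adjoint (y' i)) z) (u : E) :
    HasSum (fun i => ⟪Λ i u, y i - y' i⟫_𝕜) 0 := by
  simpa only [inner_sub_right, sub_self] using
    (h.inner_apply_of_hasSum_adjoint u).sub (h'.inner_apply_of_hasSum_adjoint u)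

end InnerProduct

theorem gframe_alternate_dual_pointwise_identity_general
    {H K : Type*} [NormedAddCommGroup H] [InnerProductSpace ℂ H] [CompleteSpace H]
    [NormedAddCommGroup K] [InnerProductSpace ℂ K] [CompleteSpace K]
    {I : Type*} (Λ Γ : I → (H →L[ℂ] K)) (S Sinv : H →L[ℂ] H)
    (hΛsum : ∀ x : H, Summable fun i => ‖Λ i x‖ ^ 2)
    (hΓsum : ∀ x : H, Summable fun i => ‖Γ i x‖ ^ 2)
    (hS : ∀ x : H, HasSum (fun i => (Λ i).adjoint (Λ i x)) (S x))
    (hSinv₁ : ∀ x : H, S (Sinv x) = x)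
    (hdual : ∀ x : H, HasSum (fun i => (Λ i).adjoint (Γ i x)) x) :
    ∀ x : H, ∑' i, ‖Λ i x - Γ i x‖ ^ 2
      = (∑' i, ‖Λ i x - Λ i (Sinv x)‖ ^ 2) + ∑' i, ‖Λ i (Sinv x) - Γ i x‖ ^ 2 := by
  intro x
  have hSv := hS (Sinv x)
  rw [hSinv₁ x] at hSv
  have hcross := hasSum_inner_apply_sub_eq_zero_of_hasSum_adjoint hSv (hdual x) (x - Sinv x)
  simp only [map_sub] at hcross
  have hsplit := HasSum.norm_add_sq
    (summable_norm_sub_sq (hΛsum x) (hΛsum (Sinv x))).hasSum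
    (summable_norm_sub_sq (hΛsum (Sinv x)) (hΓsum x)).hasSum
    hcross
  simpa only [sub_add_sub_cancel] using hsplit.tsum_eq

/-- For a g-frame `{Λ i}` with frame operator `S` and an alternate dual g-frame
`{Γ i}`, for every `x`:
`∑ i ‖Λ i x − Γ i x‖² = ∑ i ‖Λ i x − Λ i S⁻¹ x‖² + ∑ i ‖Λ i S⁻¹ x − Γ i x‖²`. -/
theorem gframe_alternate_dual_pointwise_identity
    {H K : Type*} [NormedAddCommGroup H] [InnerProductSpace ℂ H] [CompleteSpace H]
    [NormedAddCommGroup K] [InnerProductSpace ℂ K] [CompleteSpace K]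
    {I : Type*} (Λ Γ : I → (H →L[ℂ] K)) (S Sinv : H →L[ℂ] H)
    (A B C D : ℝ) (hA : 0 < A) (hB : 0 < B) (hC : 0 < C) (hD : 0 < D)
    (hΛsum : ∀ x : H, Summable fun i => ‖Λ i x‖ ^ 2)
    (hΛlow : ∀ x : H, A * ‖x‖ ^ 2 ≤ ∑' i, ‖Λ i x‖ ^ 2)
    (hΛup : ∀ x : H, ∑' i, ‖Λ i x‖ ^ 2 ≤ B * ‖x‖ ^ 2)
    (hΓsum : ∀ x : H, Summable fun i => ‖Γ i x‖ ^ 2)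
    (hΓlow : ∀ x : H, C * ‖x‖ ^ 2 ≤ ∑' i, ‖Γ i x‖ ^ 2)
    (hΓup : ∀ x : H, ∑' i, ‖Γ i x‖ ^ 2 ≤ D * ‖x‖ ^ 2)
    (hS : ∀ x : H, HasSum (fun i => (Λ i).adjoint (Λ i x)) (S x))
    (hSinv₁ : ∀ x : H, S (Sinv x) = x) (hSinv₂ : ∀ x : H, Sinv (S x) = x)
    (hdual : ∀ x : H, HasSum (fun i => (Λ i).adjoint (Γ i x)) x) :
    ∀ x : H, ∑' i, ‖Λ i x - Γ i x‖ ^ 2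
      = (∑' i, ‖Λ i x - Λ i (Sinv x)‖ ^ 2) + ∑' i, ‖Λ i (Sinv x) - Γ i x‖ ^ 2 :=
  gframe_alternate_dual_pointwise_identity_general Λ Γ S Sinv hΛsum hΓsum hS hSinv₁ hdual
end

section
/- Let {Λ_i} be a g-frame for H with g-frame operator S. For every alternate dual g-frame {Γ_i} of {Λ_i} and every x ∈ H, ∑_i ‖Λ_i x − Γ_i x‖² ≥ ∑_i ‖Λ_i x − Λ_i S^{-1} x‖², with equality for all x if and only if Γ_i = Λ_i S^{-1} for all i. -/
/-!
Write `Γ i x = Λ i (S⁻¹ x) + r i` with residual `r i = Γ i x - Λ i (S⁻¹ x)`. Both `{Γ i}` and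
`{Λ i S⁻¹}` are duals of `{Λ i}`, so `∑ Λ i* r i = 0`, i.e. `(r i)` is orthogonal in `ℓ²` to
every sequence `(Λ i y)`. Pythagoras applied to `Λ i x - Γ i x = Λ i (x - S⁻¹ x) - r i` gives
`∑ ‖Λ i x - Γ i x‖² = ∑ ‖Λ i x - Λ i S⁻¹ x‖² + ∑ ‖r i‖²`, and the last sum vanishes for
all `x` exactly when `Γ i = Λ i S⁻¹`.
-/

open scoped InnerProductSpace

theorem Summable.norm_sub_sq {ι E : Type*} [SeminormedAddCommGroup E] {f g : ι → E}
    (hf : Summable fun i => ‖f i‖ ^ 2) (hg : Summable fun i => ‖g i‖ ^ 2) :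
    Summable fun i => ‖f i - g i‖ ^ 2 :=
  ((hf.add hg).mul_left 2).of_nonneg_of_le (fun _ => by positivity) fun i =>
    (pow_le_pow_left₀ (norm_nonneg _) (norm_sub_le _ _) 2).trans add_sq_le

section GFrame

variable {𝕜 E F ι : Type*} [RCLike 𝕜]
  [NormedAddCommGroup E] [InnerProductSpace 𝕜 E] [CompleteSpace E]
  [NormedAddCommGroup F] [InnerProductSpace 𝕜 F] [CompleteSpace F]

theorem hasSum_inner_apply_of_hasSum_adjoint_eq_zero {Λ : ι → E →L[𝕜] F} {r : ι → F}
    (hr : HasSum (fun i => (Λ i).adjoint (r i)) 0) (y : E) :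
    HasSum (fun i => ⟪Λ i y, r i⟫_𝕜) 0 := by
  simpa [ContinuousLinearMap.adjoint_inner_right] using (innerSL 𝕜 y).hasSum hr

theorem tsum_norm_apply_sub_sq_of_hasSum_adjoint_eq_zero {Λ : ι → E →L[𝕜] F} {r : ι → F}
    {y : E} (hΛ : Summable fun i => ‖Λ i y‖ ^ 2) (hr : Summable fun i => ‖r i‖ ^ 2)
    (horth : HasSum (fun i => (Λ i).adjoint (r i)) 0) :
    ∑' i, ‖Λ i y - r i‖ ^ 2 = ∑' i, ‖Λ i y‖ ^ 2 + ∑' i, ‖r i‖ ^ 2 := by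
  have hcross : HasSum (fun i => RCLike.re ⟪Λ i y, r i⟫_𝕜) 0 := by
    simpa using RCLike.reCLM.hasSum (hasSum_inner_apply_of_hasSum_adjoint_eq_zero horth y)
  simp_rw [norm_sub_sq (𝕜 := 𝕜)]
  simpa using ((hΛ.hasSum.sub (hcross.mul_left 2)).add hr.hasSum).tsum_eq

variable {Λ Γ : ι → E →L[𝕜] F} {S Sinv : E →L[𝕜] E}

theorem hasSum_adjoint_dual_sub_canonical_dual_eq_zero
    (hS : ∀ x, HasSum (fun i => (Λ i).adjoint (Λ i x)) (S x)) (hSinv : ∀ x, S (Sinv x) = x)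
    (hdual : ∀ x, HasSum (fun i => (Λ i).adjoint (Γ i x)) x) (x : E) :
    HasSum (fun i => (Λ i).adjoint (Γ i x - Λ i (Sinv x))) 0 := by
  simpa [hSinv, map_sub] using (hdual x).sub (hS (Sinv x))

theorem tsum_norm_sub_dual_sq_eq_add
    (hΛsum : ∀ x, Summable fun i => ‖Λ i x‖ ^ 2) (hΓsum : ∀ x, Summable fun i => ‖Γ i x‖ ^ 2)
    (hS : ∀ x, HasSum (fun i => (Λ i).adjoint (Λ i x)) (S x)) (hSinv : ∀ x, S (Sinv x) = x)
    (hdual : ∀ x, HasSum (fun i => (Λ i).adjoint (Γ i x)) x) (x : E) :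
    ∑' i, ‖Λ i x - Γ i x‖ ^ 2 =
      ∑' i, ‖Λ i x - Λ i (Sinv x)‖ ^ 2 + ∑' i, ‖Γ i x - Λ i (Sinv x)‖ ^ 2 := by
  have hdecomp : ∀ i, Λ i x - Γ i x = Λ i (x - Sinv x) - (Γ i x - Λ i (Sinv x)) := fun i => by
    rw [map_sub]; abel
  simp_rw [hdecomp, ← map_sub]
  exact tsum_norm_apply_sub_sq_of_hasSum_adjoint_eq_zero (hΛsum _)
    ((hΓsum x).norm_sub_sq (hΛsum (Sinv x)))
    (hasSum_adjoint_dual_sub_canonical_dual_eq_zero hS hSinv hdual x)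

end GFrame

theorem gframe_alternate_dual_best_approx_pointwise_general
    {H K : Type*} [NormedAddCommGroup H] [InnerProductSpace ℂ H] [CompleteSpace H]
    [NormedAddCommGroup K] [InnerProductSpace ℂ K] [CompleteSpace K]
    {I : Type*} (Λ Γ : I → (H →L[ℂ] K)) (S Sinv : H →L[ℂ] H)
    (hΛsum : ∀ x : H, Summable fun i => ‖Λ i x‖ ^ 2)
    (hΓsum : ∀ x : H, Summable fun i => ‖Γ i x‖ ^ 2)
    (hS : ∀ x : H, HasSum (fun i => (Λ i).adjoint (Λ i x)) (S x))
    (hSinv₁ : ∀ x : H, S (Sinv x) = x)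
    (hdual : ∀ x : H, HasSum (fun i => (Λ i).adjoint (Γ i x)) x) :
    (∀ x : H, (∑' i, ‖Λ i x - Λ i (Sinv x)‖ ^ 2) ≤ ∑' i, ‖Λ i x - Γ i x‖ ^ 2) ∧
    ((∀ x : H, (∑' i, ‖Λ i x - Γ i x‖ ^ 2) = ∑' i, ‖Λ i x - Λ i (Sinv x)‖ ^ 2)
      ↔ ∀ i, Γ i = (Λ i) ∘L Sinv) := by
  have key := tsum_norm_sub_dual_sq_eq_add hΛsum hΓsum hS hSinv₁ hdual
  refine ⟨fun x => (key x).symm ▸ le_add_of_nonneg_right (tsum_nonneg fun _ => by positivity),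
    fun heq i => ContinuousLinearMap.ext fun x => ?_, fun hΓ x => by simp [hΓ]⟩
  have hzero : ∑' j, ‖Γ j x - Λ j (Sinv x)‖ ^ 2 = 0 := by linarith [key x, heq x]
  have hterms := (hasSum_zero_iff_of_nonneg fun _ => by positivity).1 
    (hzero ▸ ((hΓsum x).norm_sub_sq (hΛsum (Sinv x))).hasSum)
  simpa [sub_eq_zero] using congrFun hterms i

/-- For a g-frame `{Λ i}` with frame operator `S` and any alternate dual g-frame
`{Γ i}`: `∑ i ‖Λ i x − Γ i x‖² ≥ ∑ i ‖Λ i x − Λ i S⁻¹ x‖²` for all `x`, with equality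
for all `x` iff `Γ i = Λ i S⁻¹` for all `i`. -/
theorem gframe_alternate_dual_best_approx_pointwise
    {H K : Type*} [NormedAddCommGroup H] [InnerProductSpace ℂ H] [CompleteSpace H]
    [NormedAddCommGroup K] [InnerProductSpace ℂ K] [CompleteSpace K]
    {I : Type*} (Λ Γ : I → (H →L[ℂ] K)) (S Sinv : H →L[ℂ] H)
    (A B C D : ℝ) (hA : 0 < A) (hB : 0 < B) (hC : 0 < C) (hD : 0 < D)
    (hΛsum : ∀ x : H, Summable fun i => ‖Λ i x‖ ^ 2)
    (hΛlow : ∀ x : H, A * ‖x‖ ^ 2 ≤ ∑' i, ‖Λ i x‖ ^ 2)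
    (hΛup : ∀ x : H, ∑' i, ‖Λ i x‖ ^ 2 ≤ B * ‖x‖ ^ 2)
    (hΓsum : ∀ x : H, Summable fun i => ‖Γ i x‖ ^ 2)
    (hΓlow : ∀ x : H, C * ‖x‖ ^ 2 ≤ ∑' i, ‖Γ i x‖ ^ 2)
    (hΓup : ∀ x : H, ∑' i, ‖Γ i x‖ ^ 2 ≤ D * ‖x‖ ^ 2)
    (hS : ∀ x : H, HasSum (fun i => (Λ i).adjoint (Λ i x)) (S x))
    (hSinv₁ : ∀ x : H, S (Sinv x) = x) (hSinv₂ : ∀ x : H, Sinv (S x) = x)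
    (hdual : ∀ x : H, HasSum (fun i => (Λ i).adjoint (Γ i x)) x) :
    (∀ x : H, (∑' i, ‖Λ i x - Λ i (Sinv x)‖ ^ 2) ≤ ∑' i, ‖Λ i x - Γ i x‖ ^ 2) ∧
    ((∀ x : H, (∑' i, ‖Λ i x - Γ i x‖ ^ 2) = ∑' i, ‖Λ i x - Λ i (Sinv x)‖ ^ 2)
      ↔ ∀ i, Γ i = (Λ i) ∘L Sinv) :=
  gframe_alternate_dual_best_approx_pointwise_general Λ Γ S Sinv hΛsum hΓsum hS hSinv₁ hdual
end

section
/- For any g-frame {Λ_i} with frame operator S and any alternate dual g-frame {Γ_i}, and for all x ∈ H: ∑_i ‖Λ_i S^{-1} x − Γ_i x‖² = ∑_i ‖Γ_i x‖² − ⟨x, S^{-1} x⟩. -/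
open scoped InnerProductSpace

/-! Put `y = S⁻¹ x`. Pairing the series `∑ Λᵢ* Λᵢ y = S y = x` and `∑ Λᵢ* Γᵢ x = x` with `y`
gives `∑ ‖Λᵢ y‖² = ⟨y, x⟩` and `∑ ⟨Λᵢ y, Γᵢ x⟩ = ⟨y, x⟩`; expanding
`‖Λᵢ y − Γᵢ x‖² = ‖Λᵢ y‖² − 2 Re ⟨Λᵢ y, Γᵢ x⟩ + ‖Γᵢ x‖²` termwise then leaves
`∑ ‖Γᵢ x‖² − Re ⟨x, y⟩`. -/

section

variable {𝕜 E F I : Type*} [RCLike 𝕜]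
  [NormedAddCommGroup E] [InnerProductSpace 𝕜 E] [CompleteSpace E]
  [NormedAddCommGroup F] [InnerProductSpace 𝕜 F] [CompleteSpace F]

theorem HasSum.inner_apply_of_adjoint {Λ : I → E →L[𝕜] F} {v : I → F} {z : E}
    (h : HasSum (fun i => (Λ i).adjoint (v i)) z) (y : E) :
    HasSum (fun i => ⟪Λ i y, v i⟫_𝕜) ⟪y, z⟫_𝕜 := by
  simpa only [innerSL_apply_apply, ContinuousLinearMap.adjoint_inner_right]
    using h.mapL (innerSL 𝕜 y)

theorem HasSum.norm_sq_of_adjoint_self {Λ : I → E →L[𝕜] F} {y z : E}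
    (h : HasSum (fun i => (Λ i).adjoint (Λ i y)) z) :
    HasSum (fun i => ‖Λ i y‖ ^ 2) (RCLike.re ⟪y, z⟫_𝕜) := by
  simpa only [inner_self_eq_norm_sq] using RCLike.hasSum_re 𝕜 (h.inner_apply_of_adjoint y)

end

theorem HasSum.norm_sub_sq {𝕜 F I : Type*} [RCLike 𝕜] [NormedAddCommGroup F]
    [InnerProductSpace 𝕜 F] {u v : I → F} {a b c : ℝ}
    (hu : HasSum (fun i => ‖u i‖ ^ 2) a) (hv : HasSum (fun i => ‖v i‖ ^ 2) b)
    (huv : HasSum (fun i => RCLike.re ⟪u i, v i⟫_𝕜) c) :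
    HasSum (fun i => ‖u i - v i‖ ^ 2) (a - 2 * c + b) := by
  simpa only [← _root_.norm_sub_sq] using (hu.sub (huv.mul_left 2)).add hv

theorem gframe_alternate_dual_canonical_dist_general
    {H K : Type*} [NormedAddCommGroup H] [InnerProductSpace ℂ H] [CompleteSpace H]
    [NormedAddCommGroup K] [InnerProductSpace ℂ K] [CompleteSpace K]
    {I : Type*} (Λ Γ : I → (H →L[ℂ] K)) (S Sinv : H →L[ℂ] H)
    (hΓsum : ∀ x : H, Summable fun i => ‖Γ i x‖ ^ 2)
    (hS : ∀ x : H, HasSum (fun i => (Λ i).adjoint (Λ i x)) (S x))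
    (hSinv₁ : ∀ x : H, S (Sinv x) = x)
    (hdual : ∀ x : H, HasSum (fun i => (Λ i).adjoint (Γ i x)) x) :
    ∀ x : H, ∑' i, ‖Λ i (Sinv x) - Γ i x‖ ^ 2
      = (∑' i, ‖Γ i x‖ ^ 2) - RCLike.re (⟪x, Sinv x⟫_ℂ) := by
  intro x
  set y := Sinv x
  have hΛ : HasSum (fun i => ‖Λ i y‖ ^ 2) (RCLike.re ⟪y, x⟫_ℂ) :=
    hSinv₁ x ▸ (hS y).norm_sq_of_adjoint_self
  have hcross : HasSum (fun i => RCLike.re ⟪Λ i y, Γ i x⟫_ℂ) (RCLike.re ⟪y, x⟫_ℂ) :=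
    RCLike.hasSum_re ℂ ((hdual x).inner_apply_of_adjoint y)
  rw [(hΛ.norm_sub_sq (hΓsum x).hasSum hcross).tsum_eq, inner_re_symm y x]
  ring

/-- For a g-frame `{Λ i}` with frame operator `S` and an alternate dual g-frame
`{Γ i}`, for all `x`: `∑ i ‖Λ i S⁻¹ x − Γ i x‖² = ∑ i ‖Γ i x‖² − ⟨x, S⁻¹ x⟩`. -/
theorem gframe_alternate_dual_canonical_dist
    {H K : Type*} [NormedAddCommGroup H] [InnerProductSpace ℂ H] [CompleteSpace H]
    [NormedAddCommGroup K] [InnerProductSpace ℂ K] [CompleteSpace K]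
    {I : Type*} (Λ Γ : I → (H →L[ℂ] K)) (S Sinv : H →L[ℂ] H)
    (A B C D : ℝ) (hA : 0 < A) (hB : 0 < B) (hC : 0 < C) (hD : 0 < D)
    (hΛsum : ∀ x : H, Summable fun i => ‖Λ i x‖ ^ 2)
    (hΛlow : ∀ x : H, A * ‖x‖ ^ 2 ≤ ∑' i, ‖Λ i x‖ ^ 2)
    (hΛup : ∀ x : H, ∑' i, ‖Λ i x‖ ^ 2 ≤ B * ‖x‖ ^ 2)
    (hΓsum : ∀ x : H, Summable fun i => ‖Γ i x‖ ^ 2)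
    (hΓlow : ∀ x : H, C * ‖x‖ ^ 2 ≤ ∑' i, ‖Γ i x‖ ^ 2)
    (hΓup : ∀ x : H, ∑' i, ‖Γ i x‖ ^ 2 ≤ D * ‖x‖ ^ 2)
    (hS : ∀ x : H, HasSum (fun i => (Λ i).adjoint (Λ i x)) (S x))
    (hSinv₁ : ∀ x : H, S (Sinv x) = x) (hSinv₂ : ∀ x : H, Sinv (S x) = x)
    (hdual : ∀ x : H, HasSum (fun i => (Λ i).adjoint (Γ i x)) x) :
    ∀ x : H, ∑' i, ‖Λ i (Sinv x) - Γ i x‖ ^ 2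
      = (∑' i, ‖Γ i x‖ ^ 2) - RCLike.re (⟪x, Sinv x⟫_ℂ) :=
  gframe_alternate_dual_canonical_dist_general Λ Γ S Sinv hΓsum hS hSinv₁ hdual
end

section
/- Let H be finite-dimensional and {Λ_i} a g-frame with frame operator S. For every alternate dual g-frame {Γ_i} of {Λ_i}, ∑_i ‖Λ_i − Γ_i‖_F² ≥ ∑_i ‖Λ_i − Λ_i S^{-1}‖_F², with equality if and only if Γ_i = Λ_i S^{-1} for all i. -/
/-! Write `Λ i - Γ i = (Λ i - Λ i S⁻¹) - (Γ i - Λ i S⁻¹)`. Since `Λ i S⁻¹` is itself a dual of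
`Λ`, `∑ Λ i* (Γ i - Λ i S⁻¹) = 0`, hence `∑ ⟪Λ i y, (Γ i - Λ i S⁻¹) x⟫ = 0` for all `x, y`: the
two families are orthogonal in `ℓ²(I)` of Hilbert–Schmidt operators, and Pythagoras gives
`∑ ‖Λ i - Γ i‖² = ∑ ‖Λ i - Λ i S⁻¹‖² + ∑ ‖Γ i - Λ i S⁻¹‖²`. Equality forces the last sum,
hence every `Γ i - Λ i S⁻¹`, to vanish. -/

open scoped InnerProductSpace

section SquareSummable

variable {ι E : Type*}

lemma summable_norm_sub_sq_s12 [SeminormedAddCommGroup E] {u v : ι → E}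
    (hu : Summable fun i => ‖u i‖ ^ 2) (hv : Summable fun i => ‖v i‖ ^ 2) :
    Summable fun i => ‖u i - v i‖ ^ 2 :=
  .of_nonneg_of_le (fun _ => by positivity)
    (fun i => (pow_le_pow_left₀ (norm_nonneg _) (norm_sub_le _ _) 2).trans add_sq_le)
    ((hu.add hv).mul_left 2)

lemma hasSum_norm_sub_sq_of_hasSum_re_inner {𝕜 : Type*} [RCLike 𝕜] [SeminormedAddCommGroup E]
    [InnerProductSpace 𝕜 E] {u v : ι → E}
    (hu : Summable fun i => ‖u i‖ ^ 2) (hv : Summable fun i => ‖v i‖ ^ 2)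
    (huv : HasSum (fun i => RCLike.re ⟪u i, v i⟫_𝕜) 0) :
    HasSum (fun i => ‖u i - v i‖ ^ 2) (∑' i, ‖u i‖ ^ 2 + ∑' i, ‖v i‖ ^ 2) := by
  simpa only [mul_zero, sub_zero, ← norm_sub_sq] using
    (hu.hasSum.sub (huv.mul_left 2)).add hv.hasSum

end SquareSummable

section HilbertSchmidt

variable {H K I : Type*} [NormedAddCommGroup H] [InnerProductSpace ℂ H] [FiniteDimensional ℂ H]
  [NormedAddCommGroup K] [InnerProductSpace ℂ K]

lemma hsNormSq_nonneg (T : H →L[ℂ] K) : 0 ≤ hsNormSq T :=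
  Finset.sum_nonneg fun _ _ => by positivity

lemma hsNormSq_eq_zero_iff {T : H →L[ℂ] K} : hsNormSq T = 0 ↔ T = 0 := by
  refine ⟨fun hT => ?_, fun hT => by simp [hsNormSq, hT]⟩
  have hbasis : ∀ k, T (stdOrthonormalBasis ℂ H k) = 0 := fun k => by
    simpa using (Finset.sum_eq_zero_iff_of_nonneg fun _ _ => by positivity).1 hT k
      (Finset.mem_univ k)
  exact ContinuousLinearMap.coe_injective <|
    (stdOrthonormalBasis ℂ H).toBasis.ext fun k => by simpa using hbasis k

lemma hasSum_hsNormSq {P : I → H →L[ℂ] K} (hP : ∀ x, Summable fun i => ‖P i x‖ ^ 2) :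
    HasSum (fun i => hsNormSq (P i)) (∑ k, ∑' i, ‖P i (stdOrthonormalBasis ℂ H k)‖ ^ 2) :=
  hasSum_sum fun _ _ => (hP _).hasSum

lemma tsum_hsNormSq_eq_zero_iff {P : I → H →L[ℂ] K}
    (hP : ∀ x, Summable fun i => ‖P i x‖ ^ 2) :
    ∑' i, hsNormSq (P i) = 0 ↔ ∀ i, P i = 0 := by
  rw [← (hasSum_hsNormSq hP).summable.hasSum_iff,
    hasSum_zero_iff_of_nonneg fun i => hsNormSq_nonneg (P i), funext_iff]
  simp only [Pi.zero_apply, hsNormSq_eq_zero_iff]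

lemma tsum_hsNormSq_sub_of_hasSum_inner {T Δ : I → H →L[ℂ] K}
    (hT : ∀ x, Summable fun i => ‖T i x‖ ^ 2) (hΔ : ∀ x, Summable fun i => ‖Δ i x‖ ^ 2)
    (horth : ∀ x, HasSum (fun i => ⟪T i x, Δ i x⟫_ℂ) 0) :
    ∑' i, hsNormSq (T i - Δ i) = ∑' i, hsNormSq (T i) + ∑' i, hsNormSq (Δ i) := by
  have hTΔ : ∀ x, Summable fun i => ‖(T i - Δ i) x‖ ^ 2 :=
    fun x => summable_norm_sub_sq_s12 (hT x) (hΔ x)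
  rw [(hasSum_hsNormSq hTΔ).tsum_eq, (hasSum_hsNormSq hT).tsum_eq,
    (hasSum_hsNormSq hΔ).tsum_eq, ← Finset.sum_add_distrib]
  refine Finset.sum_congr rfl fun k _ => ?_
  have hre := RCLike.hasSum_re ℂ (horth (stdOrthonormalBasis ℂ H k))
  rw [map_zero] at hre
  exact (hasSum_norm_sub_sq_of_hasSum_re_inner (hT _) (hΔ _) hre).tsum_eq

end HilbertSchmidt

section AlternateDual

variable {𝕜 E F I : Type*} [RCLike 𝕜] [NormedAddCommGroup E] [InnerProductSpace 𝕜 E]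
  [CompleteSpace E] [NormedAddCommGroup F] [InnerProductSpace 𝕜 F] [CompleteSpace F]
  {Λ Γ Γ' : I → E →L[𝕜] F}

lemma hasSum_adjoint_comp_inverse {S Sinv : E →L[𝕜] E}
    (hS : ∀ x, HasSum (fun i => (Λ i).adjoint (Λ i x)) (S x))
    (hSinv : ∀ x, S (Sinv x) = x) (x : E) :
    HasSum (fun i => (Λ i).adjoint ((Λ i ∘L Sinv) x)) x :=
  by simpa only [ContinuousLinearMap.comp_apply, hSinv] using hS (Sinv x)

lemma hasSum_inner_apply_sub_of_duals
    (hΓ : ∀ x, HasSum (fun i => (Λ i).adjoint (Γ i x)) x)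
    (hΓ' : ∀ x, HasSum (fun i => (Λ i).adjoint (Γ' i x)) x) (y x : E) :
    HasSum (fun i => ⟪Λ i y, (Γ i - Γ' i) x⟫_𝕜) 0 := by
  have h := ((hΓ x).sub (hΓ' x)).mapL (innerSL 𝕜 y)
  simpa only [sub_self, map_zero, innerSL_apply_apply, ← map_sub,
    ContinuousLinearMap.adjoint_inner_right, sub_apply] using h

end AlternateDual

theorem gframe_alternate_dual_best_approx_hs_general
    {H K : Type*} [NormedAddCommGroup H] [InnerProductSpace ℂ H] [FiniteDimensional ℂ H]
    [NormedAddCommGroup K] [InnerProductSpace ℂ K] [CompleteSpace K]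
    {I : Type*} (Λ Γ : I → (H →L[ℂ] K)) (S Sinv : H →L[ℂ] H)
    (hΛsum : ∀ x : H, Summable fun i => ‖Λ i x‖ ^ 2)
    (hΓsum : ∀ x : H, Summable fun i => ‖Γ i x‖ ^ 2)
    (hS : ∀ x : H, HasSum (fun i => (Λ i).adjoint (Λ i x)) (S x))
    (hSinv₁ : ∀ x : H, S (Sinv x) = x)
    (hdual : ∀ x : H, HasSum (fun i => (Λ i).adjoint (Γ i x)) x) :
    (∑' i, hsNormSq (Λ i - (Λ i) ∘L Sinv)) ≤ ∑' i, hsNormSq (Λ i - Γ i) ∧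
    ((∑' i, hsNormSq (Λ i - Γ i)) = (∑' i, hsNormSq (Λ i - (Λ i) ∘L Sinv))
      ↔ ∀ i, Γ i = (Λ i) ∘L Sinv) := by
  have hΛSinv : ∀ x, Summable fun i => ‖(Λ i ∘L Sinv) x‖ ^ 2 := fun x => hΛsum (Sinv x)
  have hΔ : ∀ x, Summable fun i => ‖(Γ i - Λ i ∘L Sinv) x‖ ^ 2 :=
    fun x => summable_norm_sub_sq_s12 (hΓsum x) (hΛSinv x)
  have hpyth : ∑' i, hsNormSq (Λ i - Γ i) = ∑' i, hsNormSq (Λ i - Λ i ∘L Sinv)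
      + ∑' i, hsNormSq (Γ i - Λ i ∘L Sinv) := by
    have horth : ∀ x, HasSum (fun i => ⟪(Λ i - Λ i ∘L Sinv) x, (Γ i - Λ i ∘L Sinv) x⟫_ℂ) 0 :=
      fun x => by
        simpa only [sub_apply, map_sub, ContinuousLinearMap.comp_apply] using
          hasSum_inner_apply_sub_of_duals hdual (hasSum_adjoint_comp_inverse hS hSinv₁)
            (x - Sinv x) x
    have hT : ∀ x, Summable fun i => ‖(Λ i - Λ i ∘L Sinv) x‖ ^ 2 :=
      fun x => summable_norm_sub_sq_s12 (hΛsum x) (hΛSinv x)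
    simpa only [sub_sub_sub_cancel_right] using tsum_hsNormSq_sub_of_hasSum_inner hT hΔ horth
  have hΔnonneg : 0 ≤ ∑' i, hsNormSq (Γ i - Λ i ∘L Sinv) :=
    tsum_nonneg fun i => hsNormSq_nonneg _
  refine ⟨hpyth ▸ le_add_of_nonneg_right hΔnonneg, ?_⟩
  rw [hpyth, add_eq_left, tsum_hsNormSq_eq_zero_iff hΔ]
  simp only [sub_eq_zero]

/-- For a g-frame `{Λ i}` on a finite-dimensional Hilbert space with frame operator
`S` and any alternate dual g-frame `{Γ i}`:
`∑ i ‖Λ i − Γ i‖_F² ≥ ∑ i ‖Λ i − Λ i S⁻¹‖_F²`, with equality iff `Γ i = Λ i S⁻¹`. -/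
theorem gframe_alternate_dual_best_approx_hs
    {H K : Type*} [NormedAddCommGroup H] [InnerProductSpace ℂ H] [FiniteDimensional ℂ H]
    [NormedAddCommGroup K] [InnerProductSpace ℂ K] [CompleteSpace K]
    {I : Type*} (Λ Γ : I → (H →L[ℂ] K)) (S Sinv : H →L[ℂ] H)
    (A B C D : ℝ) (hA : 0 < A) (hB : 0 < B) (hC : 0 < C) (hD : 0 < D)
    (hΛsum : ∀ x : H, Summable fun i => ‖Λ i x‖ ^ 2)
    (hΛlow : ∀ x : H, A * ‖x‖ ^ 2 ≤ ∑' i, ‖Λ i x‖ ^ 2)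
    (hΛup : ∀ x : H, ∑' i, ‖Λ i x‖ ^ 2 ≤ B * ‖x‖ ^ 2)
    (hΓsum : ∀ x : H, Summable fun i => ‖Γ i x‖ ^ 2)
    (hΓlow : ∀ x : H, C * ‖x‖ ^ 2 ≤ ∑' i, ‖Γ i x‖ ^ 2)
    (hΓup : ∀ x : H, ∑' i, ‖Γ i x‖ ^ 2 ≤ D * ‖x‖ ^ 2)
    (hS : ∀ x : H, HasSum (fun i => (Λ i).adjoint (Λ i x)) (S x))
    (hSinv₁ : ∀ x : H, S (Sinv x) = x) (hSinv₂ : ∀ x : H, Sinv (S x) = x)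
    (hdual : ∀ x : H, HasSum (fun i => (Λ i).adjoint (Γ i x)) x) :
    (∑' i, hsNormSq (Λ i - (Λ i) ∘L Sinv)) ≤ ∑' i, hsNormSq (Λ i - Γ i) ∧
    ((∑' i, hsNormSq (Λ i - Γ i)) = (∑' i, hsNormSq (Λ i - (Λ i) ∘L Sinv))
      ↔ ∀ i, Γ i = (Λ i) ∘L Sinv) :=
  gframe_alternate_dual_best_approx_hs_general Λ Γ S Sinv hΛsum hΓsum hS hSinv₁ hdual
end

section
/- Let 0 ≤ ε < 1 and let {Λ_i} be an ε-nearly Parseval g-frame for an n-dimensional Hilbert space H, with g-frame operator S. Then the canonical dual {Λ_i S^{-1}} satisfies ∑_i ‖Λ_i − Λ_i S^{-1}‖_F² ≤ n ε²/(1−ε). In particular, there exists a dual g-frame {Γ_i} of {Λ_i} with ∑_i ‖Λ_i − Γ_i‖_F² ≤ n ε²/(1−ε). -/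
open scoped InnerProductSpace

section

variable {𝕜 E : Type*} [RCLike 𝕜] [NormedAddCommGroup E] [InnerProductSpace 𝕜 E]

theorem ContinuousLinearMap.norm_le_of_abs_re_inner_self_le {T : E →L[𝕜] E}
    (hT : (T : E →ₗ[𝕜] E).IsSymmetric) {ε : ℝ} (hε : 0 ≤ ε)
    (h : ∀ x, |RCLike.re ⟪T x, x⟫_𝕜| ≤ ε * ‖x‖ ^ 2) : ‖T‖ ≤ ε := by
  rw [T.norm_eq_iSup_rayleighQuotient hT]
  refine ciSup_le fun x => ?_
  rw [ContinuousLinearMap.rayleighQuotient, ContinuousLinearMap.reApplyInnerSelf_apply, abs_div,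
    abs_sq]
  rcases eq_or_ne x 0 with rfl | -
  · simpa using hε
  · exact div_le_of_le_mul₀ (sq_nonneg _) hε (h x)

theorem re_inner_self_le_norm_sq_div_of_coercive (T : E →L[𝕜] E) (x : E) {c : ℝ} (hc : 0 < c)
    (h : c * ‖x‖ ^ 2 ≤ RCLike.re ⟪T x, x⟫_𝕜) : RCLike.re ⟪T x, x⟫_𝕜 ≤ ‖T x‖ ^ 2 / c := by
  have hcs : RCLike.re ⟪T x, x⟫_𝕜 ≤ ‖T x‖ * ‖x‖ := re_inner_le_norm _ _
  rw [le_div_iff₀ hc]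
  -- `c q ≤ ‖T x‖ (c ‖x‖) ≤ (‖T x‖² + c² ‖x‖²) / 2 ≤ (‖T x‖² + c q) / 2`, with `q = re ⟪T x, x⟫`
  nlinarith [sq_nonneg (‖T x‖ - c * ‖x‖)]

end

section Frame

variable {𝕜 E F ι : Type*} [RCLike 𝕜] [NormedAddCommGroup E] [InnerProductSpace 𝕜 E]
  [CompleteSpace E] [NormedAddCommGroup F] [InnerProductSpace 𝕜 F] [CompleteSpace F]
  {Λ : ι → E →L[𝕜] F} {S : E →L[𝕜] E}

theorem hasSum_inner_apply_of_hasSum_adjoint_comp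
    (hS : ∀ x, HasSum (fun i => (Λ i).adjoint (Λ i x)) (S x)) (x y : E) :
    HasSum (fun i => ⟪Λ i x, Λ i y⟫_𝕜) ⟪x, S y⟫_𝕜 := by
  simpa only [innerSL_apply_apply, ContinuousLinearMap.adjoint_inner_right] using
    (hS y).mapL (innerSL 𝕜 x)

theorem isSymmetric_of_hasSum_adjoint_comp
    (hS : ∀ x, HasSum (fun i => (Λ i).adjoint (Λ i x)) (S x)) :
    (S : E →ₗ[𝕜] E).IsSymmetric := fun x y => by
  rw [ContinuousLinearMap.coe_coe, ← inner_conj_symm]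
  refine ((RCLike.hasSum_conj 𝕜).mp ?_).unique (hasSum_inner_apply_of_hasSum_adjoint_comp hS x y)
  simpa only [inner_conj_symm] using hasSum_inner_apply_of_hasSum_adjoint_comp hS y x

theorem hasSum_norm_sq_apply_of_hasSum_adjoint_comp
    (hS : ∀ x, HasSum (fun i => (Λ i).adjoint (Λ i x)) (S x)) (x : E) :
    HasSum (fun i => ‖Λ i x‖ ^ 2) (RCLike.re ⟪S x, x⟫_𝕜) := by
  rw [inner_re_symm]
  simpa only [inner_self_eq_norm_sq] using
    RCLike.hasSum_re 𝕜 (hasSum_inner_apply_of_hasSum_adjoint_comp hS x x)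

variable (hS : ∀ x, HasSum (fun i => (Λ i).adjoint (Λ i x)) (S x)) {ε : ℝ}
  (hlow : ∀ x, (1 - ε) * ‖x‖ ^ 2 ≤ ∑' i, ‖Λ i x‖ ^ 2)
  (hup : ∀ x, ∑' i, ‖Λ i x‖ ^ 2 ≤ (1 + ε) * ‖x‖ ^ 2)
include hS hlow hup

theorem norm_sub_one_le_of_hasSum_adjoint_comp (hε : 0 ≤ ε) : ‖S - 1‖ ≤ ε := by
  refine ContinuousLinearMap.norm_le_of_abs_re_inner_self_le
    (fun x y => ?_) hε fun x => ?_
  · simpa [inner_sub_left, inner_sub_right] using isSymmetric_of_hasSum_adjoint_comp hS x y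
  · have hq := (hasSum_norm_sq_apply_of_hasSum_adjoint_comp hS x).tsum_eq
    rw [sub_apply, one_apply_eq_self, inner_sub_left, map_sub,
      inner_self_eq_norm_sq, abs_le]
    constructor <;> linarith [hlow x, hup x]

theorem tsum_norm_sq_apply_sub_inv_le (hε : 0 ≤ ε) (hε1 : ε < 1) {Sinv : E →L[𝕜] E}
    (hSinv : ∀ x, S (Sinv x) = x) (x : E) :
    ∑' i, ‖Λ i (x - Sinv x)‖ ^ 2 ≤ ε ^ 2 / (1 - ε) * ‖x‖ ^ 2 := by
  set w := x - Sinv x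
  have hSw : S w = (S - 1) x := by simp [w, hSinv]
  have hq := (hasSum_norm_sq_apply_of_hasSum_adjoint_comp hS w).tsum_eq
  have hnorm : ‖(S - 1) x‖ ≤ ε * ‖x‖ := ((S - 1).le_opNorm x).trans <| by
    gcongr; exact norm_sub_one_le_of_hasSum_adjoint_comp hS hlow hup hε
  calc ∑' i, ‖Λ i w‖ ^ 2 = RCLike.re ⟪S w, w⟫_𝕜 := hq
    _ ≤ ‖S w‖ ^ 2 / (1 - ε) :=
      re_inner_self_le_norm_sq_div_of_coercive S w (by linarith) (hq ▸ hlow w)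
    _ ≤ (ε * ‖x‖) ^ 2 / (1 - ε) := by rw [hSw]; gcongr
    _ = ε ^ 2 / (1 - ε) * ‖x‖ ^ 2 := by ring

end Frame

theorem tsum_hsNormSq_le {H K ι : Type*} [NormedAddCommGroup H] [InnerProductSpace ℂ H]
    [FiniteDimensional ℂ H] [NormedAddCommGroup K] [InnerProductSpace ℂ K]
    {A : ι → H →L[ℂ] K} (hA : ∀ x, Summable fun i => ‖A i x‖ ^ 2) {C : ℝ}
    (hC : ∀ x, ∑' i, ‖A i x‖ ^ 2 ≤ C * ‖x‖ ^ 2) :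
    ∑' i, hsNormSq (A i) ≤ Module.finrank ℂ H * C := by
  set e := stdOrthonormalBasis ℂ H
  calc ∑' i, hsNormSq (A i) = ∑ k, ∑' i, ‖A i (e k)‖ ^ 2 :=
        Summable.tsum_finsetSum fun k _ => hA (e k)
    _ ≤ ∑ _k, C := Finset.sum_le_sum fun k _ => by simpa [e.orthonormal.1 k] using hC (e k)
    _ = Module.finrank ℂ H * C := by simp

theorem nearly_parseval_gframe_dual_dist_le_general
    {H K : Type*} [NormedAddCommGroup H] [InnerProductSpace ℂ H] [FiniteDimensional ℂ H]
    [NormedAddCommGroup K] [InnerProductSpace ℂ K] [CompleteSpace K]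
    {I : Type*} (Λ : I → (H →L[ℂ] K)) (S Sinv : H →L[ℂ] H)
    (ε : ℝ) (hε0 : 0 ≤ ε) (hε1 : ε < 1)
    (hlow : ∀ x : H, (1 - ε) * ‖x‖ ^ 2 ≤ ∑' i, ‖Λ i x‖ ^ 2)
    (hup : ∀ x : H, ∑' i, ‖Λ i x‖ ^ 2 ≤ (1 + ε) * ‖x‖ ^ 2)
    (hS : ∀ x : H, HasSum (fun i => (Λ i).adjoint (Λ i x)) (S x))
    (hSinv₁ : ∀ x : H, S (Sinv x) = x) :
    (∑' i, hsNormSq (Λ i - (Λ i) ∘L Sinv)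
        ≤ (Module.finrank ℂ H : ℝ) * ε ^ 2 / (1 - ε)) ∧
    ∃ Γ : I → (H →L[ℂ] K),
      (∀ x : H, HasSum (fun i => (Λ i).adjoint (Γ i x)) x) ∧
      ∑' i, hsNormSq (Λ i - Γ i) ≤ (Module.finrank ℂ H : ℝ) * ε ^ 2 / (1 - ε) := by
  have hdist : ∑' i, hsNormSq (Λ i - (Λ i) ∘L Sinv)
      ≤ (Module.finrank ℂ H : ℝ) * ε ^ 2 / (1 - ε) := by
    have happly : ∀ i x, (Λ i - Λ i ∘L Sinv) x = Λ i (x - Sinv x) := fun i x => by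
      rw [sub_apply, ContinuousLinearMap.comp_apply, map_sub]
    rw [mul_div_assoc]
    refine tsum_hsNormSq_le (fun x => ?_) fun x => ?_ <;> simp only [happly]
    · exact (hasSum_norm_sq_apply_of_hasSum_adjoint_comp hS _).summable
    · exact tsum_norm_sq_apply_sub_inv_le hS hlow hup hε0 hε1 hSinv₁ x
  refine ⟨hdist, fun i => Λ i ∘L Sinv, fun x => ?_, hdist⟩
  simpa [hSinv₁] using hS (Sinv x)

/-- For an ε-nearly Parseval g-frame `{Λ i}` on an `n`-dimensional Hilbert space with
frame operator `S`, the canonical dual `{Λ i S⁻¹}` satisfies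
`∑ i ‖Λ i − Λ i S⁻¹‖_F² ≤ n ε²/(1−ε)`; in particular there is an alternate dual
`{Γ i}` with `∑ i ‖Λ i − Γ i‖_F² ≤ n ε²/(1−ε)`. -/
theorem nearly_parseval_gframe_dual_dist_le
    {H K : Type*} [NormedAddCommGroup H] [InnerProductSpace ℂ H] [FiniteDimensional ℂ H]
    [NormedAddCommGroup K] [InnerProductSpace ℂ K] [CompleteSpace K]
    {I : Type*} (Λ : I → (H →L[ℂ] K)) (S Sinv : H →L[ℂ] H)
    (ε : ℝ) (hε0 : 0 ≤ ε) (hε1 : ε < 1)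
    (hsum : ∀ x : H, Summable fun i => ‖Λ i x‖ ^ 2)
    (hlow : ∀ x : H, (1 - ε) * ‖x‖ ^ 2 ≤ ∑' i, ‖Λ i x‖ ^ 2)
    (hup : ∀ x : H, ∑' i, ‖Λ i x‖ ^ 2 ≤ (1 + ε) * ‖x‖ ^ 2)
    (hS : ∀ x : H, HasSum (fun i => (Λ i).adjoint (Λ i x)) (S x))
    (hSinv₁ : ∀ x : H, S (Sinv x) = x) (hSinv₂ : ∀ x : H, Sinv (S x) = x) :
    (∑' i, hsNormSq (Λ i - (Λ i) ∘L Sinv)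
        ≤ (Module.finrank ℂ H : ℝ) * ε ^ 2 / (1 - ε)) ∧
    ∃ Γ : I → (H →L[ℂ] K),
      (∀ x : H, HasSum (fun i => (Λ i).adjoint (Γ i x)) x) ∧
      ∑' i, hsNormSq (Λ i - Γ i) ≤ (Module.finrank ℂ H : ℝ) * ε ^ 2 / (1 - ε) :=
  nearly_parseval_gframe_dual_dist_le_general Λ S Sinv ε hε0 hε1 hlow hup hS hSinv₁
end

section
/- If {Λ_i} is a g-frame for a finite-dimensional Hilbert space H with g-frame operator S whose eigenvalues (with multiplicity) are λ_1,…,λ_n, then ∑_i ‖Λ_i − Λ_i S^{-1/2}‖_F² = ∑_{k=1}^n (√λ_k − 1)² and ∑_i ‖Λ_i − Λ_i S^{-1}‖_F² = ∑_{k=1}^n (λ_k − 1)²/λ_k. -/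
/-!
In an orthonormal eigenbasis `e` of `S` the Hilbert–Schmidt norm (basis independent, being
`re tr (T† T)`) gives `∑ᵢ ‖Λᵢ T‖_F² = ∑ₖ re ⟪T eₖ, S T eₖ⟫`. For `T = 1 - f(S)` the functional
calculus acts on eigenvectors by `T eₖ = (1 - f λₖ) eₖ`, so the sum is `∑ₖ λₖ (1 - f λₖ)²`;
the two identities are the cases `f t = t^(-1/2)` and `f t = t⁻¹`.
-/

open scoped InnerProductSpace

section FunctionalCalculus

variable {H : Type*} [NormedAddCommGroup H]

theorem aeval_apply_of_apply_eq_smul [NormedSpace ℂ H] {S : H →L[ℂ] H} {μ : ℝ} {x : H}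
    (hx : S x = (μ : ℂ) • x) (p : Polynomial ℝ) : Polynomial.aeval S p x = p.eval μ • x := by
  induction p using Polynomial.induction_on with
  | C a => simp [Algebra.algebraMap_eq_smul_one]
  | add p q hp hq => simp [hp, hq, add_smul]
  | monomial n a ih =>
    rw [pow_succ, ← mul_assoc, map_mul, mul_apply_eq_comp, Polynomial.aeval_X, hx, map_smul, ih,
      Complex.coe_smul, smul_smul]
    simp only [Polynomial.eval_mul, Polynomial.eval_C, Polynomial.eval_pow, Polynomial.eval_X]
    ring_nf

theorem ContinuousLinearMap.finite_spectrum_real [NormedSpace ℂ H] [FiniteDimensional ℂ H]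
    (S : H →L[ℂ] H) : (spectrum ℝ S).Finite := by
  rw [← spectrum.preimage_algebraMap ℂ, ContinuousLinearMap.spectrum_eq]
  exact (Module.End.finite_spectrum _).preimage (FaithfulSMul.algebraMap_injective ℝ ℂ).injOn

variable [InnerProductSpace ℂ H] [FiniteDimensional ℂ H]

-- The spectrum is finite, so `f` agrees on it (and at `μ`) with a Lagrange interpolation polynomial.
theorem cfc_apply_of_apply_eq_smul {S : H →L[ℂ] H} (hS : IsSelfAdjoint S) {μ : ℝ} {x : H}
    (hx : S x = (μ : ℂ) • x) (f : ℝ → ℝ) : cfc f S x = f μ • x := by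
  classical
  let s := insert μ S.finite_spectrum_real.toFinset
  let p := Lagrange.interpolate s id f
  have hp : ∀ t ∈ s, p.eval t = f t := fun t ht =>
    Lagrange.eval_interpolate_at_node (v := id) f (Set.injOn_id _) ht
  have hcfc : cfc f S = cfc p.eval S :=
    cfc_congr fun t ht => (hp t (Finset.mem_insert_of_mem (by simpa using ht))).symm
  rw [hcfc, cfc_polynomial p S, aeval_apply_of_apply_eq_smul hx,
    hp μ (Finset.mem_insert_self _ _)]

end FunctionalCalculus

section HilbertSchmidt

variable {H K : Type*} [NormedAddCommGroup H] [InnerProductSpace ℂ H] [FiniteDimensional ℂ H]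
  [NormedAddCommGroup K] [InnerProductSpace ℂ K] [CompleteSpace K]

theorem sum_norm_sq_apply_eq_re_trace (T : H →L[ℂ] K) {ι : Type*} [Fintype ι]
    (b : OrthonormalBasis ι ℂ H) :
    ∑ k, ‖T (b k)‖ ^ 2 = (LinearMap.trace ℂ H (T.adjoint ∘L T : H →L[ℂ] H)).re := by
  rw [LinearMap.trace_eq_sum_inner _ b, Complex.re_sum]
  refine Finset.sum_congr rfl fun k _ => ?_
  rw [ContinuousLinearMap.coe_coe, ContinuousLinearMap.comp_apply,
    ContinuousLinearMap.adjoint_inner_right]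
  exact (inner_self_eq_norm_sq (𝕜 := ℂ) _).symm

theorem hsNormSq_eq_sum_orthonormalBasis (T : H →L[ℂ] K) {ι : Type*} [Fintype ι]
    (b : OrthonormalBasis ι ℂ H) :
    hsNormSq T = ∑ k, ‖T (b k)‖ ^ 2 := by
  rw [hsNormSq, sum_norm_sq_apply_eq_re_trace, sum_norm_sq_apply_eq_re_trace]

end HilbertSchmidt

section FrameOperator

variable {H K I : Type*} [NormedAddCommGroup H] [InnerProductSpace ℂ H] [CompleteSpace H]
  [NormedAddCommGroup K] [InnerProductSpace ℂ K] [CompleteSpace K]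
  {Λ : I → H →L[ℂ] K} {S : H →L[ℂ] H}

theorem hasSum_inner_apply_of_hasSum_adjoint_apply
    (hS : ∀ x : H, HasSum (fun i => (Λ i).adjoint (Λ i x)) (S x)) (x y : H) :
    HasSum (fun i => ⟪Λ i x, Λ i y⟫_ℂ) ⟪x, S y⟫_ℂ := by
  simpa only [innerSL_apply_apply, ContinuousLinearMap.adjoint_inner_right] using
    (hS y).mapL (innerSL ℂ x)

theorem isSelfAdjoint_of_hasSum_adjoint_apply
    (hS : ∀ x : H, HasSum (fun i => (Λ i).adjoint (Λ i x)) (S x)) : IsSelfAdjoint S := by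
  rw [ContinuousLinearMap.isSelfAdjoint_iff_isSymmetric]
  intro x y
  have hconj := (hasSum_inner_apply_of_hasSum_adjoint_apply hS y x).mapL
    Complex.conjCLE.toContinuousLinearMap
  simp only [ContinuousLinearEquiv.coe_coe, Complex.conjCLE_apply, inner_conj_symm] at hconj
  exact hconj.unique (hasSum_inner_apply_of_hasSum_adjoint_apply hS x y)

theorem hasSum_norm_sq_apply_of_hasSum_adjoint_apply
    (hS : ∀ x : H, HasSum (fun i => (Λ i).adjoint (Λ i x)) (S x)) (x : H) :
    HasSum (fun i => ‖Λ i x‖ ^ 2) (⟪x, S x⟫_ℂ).re := by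
  have hre := (hasSum_inner_apply_of_hasSum_adjoint_apply hS x x).mapL Complex.reCLM
  convert hre using 1
  · funext i
    exact (inner_self_eq_norm_sq (𝕜 := ℂ) _).symm
  · rfl

end FrameOperator

section FrameOperatorFiniteDimensional

variable {H K I : Type*} [NormedAddCommGroup H] [InnerProductSpace ℂ H] [FiniteDimensional ℂ H]
  [NormedAddCommGroup K] [InnerProductSpace ℂ K] [CompleteSpace K]
  {Λ : I → H →L[ℂ] K} {S : H →L[ℂ] H}

theorem hasSum_hsNormSq_comp_of_hasSum_adjoint_apply
    (hS : ∀ x : H, HasSum (fun i => (Λ i).adjoint (Λ i x)) (S x)) (T : H →L[ℂ] H)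
    {ι : Type*} [Fintype ι] (b : OrthonormalBasis ι ℂ H) :
    HasSum (fun i => hsNormSq (Λ i ∘L T)) (∑ k, (⟪T (b k), S (T (b k))⟫_ℂ).re) := by
  simp only [hsNormSq_eq_sum_orthonormalBasis _ b]
  exact hasSum_sum fun k _ => hasSum_norm_sq_apply_of_hasSum_adjoint_apply hS (T (b k))

theorem tsum_hsNormSq_sub_comp_eq_sum
    (hS : ∀ x : H, HasSum (fun i => (Λ i).adjoint (Λ i x)) (S x))
    {n : ℕ} (e : OrthonormalBasis (Fin n) ℂ H) {lam : Fin n → ℝ}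
    (heig : ∀ k, S (e k) = (lam k : ℂ) • e k) {N : H →L[ℂ] H} {g : Fin n → ℝ}
    (hN : ∀ k, N (e k) = g k • e k) :
    ∑' i, hsNormSq (Λ i - Λ i ∘L N) = ∑ k, lam k * (1 - g k) ^ 2 := by
  have hsub : ∀ i, Λ i - Λ i ∘L N = Λ i ∘L (1 - N) := fun i => by
    ext x; simp
  simp only [hsub, (hasSum_hsNormSq_comp_of_hasSum_adjoint_apply hS (1 - N) e).tsum_eq]
  refine Finset.sum_congr rfl fun k _ => ?_
  have hk : (1 - N) (e k) = ((1 - g k : ℝ) : ℂ) • e k := by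
    rw [sub_apply, one_apply_eq_self, hN, Complex.ofReal_sub,
      Complex.ofReal_one, sub_smul, one_smul, Complex.coe_smul]
  rw [hk, map_smul, heig, smul_smul, inner_smul_left, inner_smul_right, inner_self_eq_norm_sq_to_K,
    e.orthonormal.1 k]
  norm_num
  ring

end FrameOperatorFiniteDimensional

theorem gframe_dist_eq_eigenvalue_sums_general
    {H K : Type*} [NormedAddCommGroup H] [InnerProductSpace ℂ H] [FiniteDimensional ℂ H]
    [NormedAddCommGroup K] [InnerProductSpace ℂ K] [CompleteSpace K]
    {I : Type*} (Λ : I → (H →L[ℂ] K)) (S : H →L[ℂ] H)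
    (hS : ∀ x : H, HasSum (fun i => (Λ i).adjoint (Λ i x)) (S x))
    (n : ℕ) (e : OrthonormalBasis (Fin n) ℂ H) (lam : Fin n → ℝ)
    (hlam : ∀ k, 0 < lam k) (heig : ∀ k, S (e k) = (lam k : ℂ) • e k) :
    (∑' i, hsNormSq (Λ i - (Λ i) ∘L cfc (fun t : ℝ => t ^ (-(1/2 : ℝ))) S)
        = ∑ k, (Real.sqrt (lam k) - 1) ^ 2) ∧
    (∑' i, hsNormSq (Λ i - (Λ i) ∘L cfc (fun t : ℝ => t⁻¹) S)
        = ∑ k, (lam k - 1) ^ 2 / lam k) := by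
  have hSA : IsSelfAdjoint S := isSelfAdjoint_of_hasSum_adjoint_apply hS
  have hdist (f : ℝ → ℝ) :
      ∑' i, hsNormSq (Λ i - Λ i ∘L cfc f S) = ∑ k, lam k * (1 - f (lam k)) ^ 2 :=
    tsum_hsNormSq_sub_comp_eq_sum hS e heig fun k => cfc_apply_of_apply_eq_smul hSA (heig k) f
  refine ⟨?_, ?_⟩ <;> rw [hdist] <;> refine Finset.sum_congr rfl fun k _ => ?_
  · rw [Real.rpow_neg (hlam k).le, ← Real.sqrt_eq_rpow]
    field_simp [(Real.sqrt_pos.mpr (hlam k)).ne']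
    rw [Real.sq_sqrt (hlam k).le]
  · field_simp [(hlam k).ne']

/-- For a g-frame `{Λ i}` on a finite-dimensional Hilbert space whose frame operator `S`
has orthonormal eigenbasis `{e k}` with eigenvalues `{λ k}`:
`∑ i ‖Λ i − Λ i S^{-1/2}‖_F² = ∑ k (√λ k − 1)²` and
`∑ i ‖Λ i − Λ i S⁻¹‖_F² = ∑ k (λ k − 1)²/λ k`. -/
theorem gframe_dist_eq_eigenvalue_sums
    {H K : Type*} [NormedAddCommGroup H] [InnerProductSpace ℂ H] [FiniteDimensional ℂ H]
    [NormedAddCommGroup K] [InnerProductSpace ℂ K] [CompleteSpace K]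
    {I : Type*} (Λ : I → (H →L[ℂ] K)) (S : H →L[ℂ] H)
    (A B : ℝ) (hA : 0 < A) (hB : 0 < B)
    (hsum : ∀ x : H, Summable fun i => ‖Λ i x‖ ^ 2)
    (hlow : ∀ x : H, A * ‖x‖ ^ 2 ≤ ∑' i, ‖Λ i x‖ ^ 2)
    (hup : ∀ x : H, ∑' i, ‖Λ i x‖ ^ 2 ≤ B * ‖x‖ ^ 2)
    (hS : ∀ x : H, HasSum (fun i => (Λ i).adjoint (Λ i x)) (S x))
    (n : ℕ) (e : OrthonormalBasis (Fin n) ℂ H) (lam : Fin n → ℝ)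
    (hlam : ∀ k, 0 < lam k) (heig : ∀ k, S (e k) = (lam k : ℂ) • e k) :
    (∑' i, hsNormSq (Λ i - (Λ i) ∘L cfc (fun t : ℝ => t ^ (-(1/2 : ℝ))) S)
        = ∑ k, (Real.sqrt (lam k) - 1) ^ 2) ∧
    (∑' i, hsNormSq (Λ i - (Λ i) ∘L cfc (fun t : ℝ => t⁻¹) S)
        = ∑ k, (lam k - 1) ^ 2 / lam k) :=
  gframe_dist_eq_eigenvalue_sums_general Λ S hS n e lam hlam heig
end
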